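/- arXiv:1702.03652 — 3 statements merged into one kernel-verified Lean document; each statement's English description precedes it below -/
import Mathlib

section
/- Let v be a positive smooth function on a domain Ω ⊂ ℝⁿ, n ≥ 3, satisfying v·Δv = (n/2)(|∇v|² − 1). Then the function w = Δv satisfies the differential inequality v·Δw + (2−n)·∇v·∇w = n|∇²v|² − (Δv)² ≥ 0, where |∇²v|² is the squared Frobenius norm of the Hessian of v. -/
/-! Apply `Δ` to both sides of `v Δv = (n/2)(|∇v|² - 1)`. The product rule
`Δ(fg) = g Δf + 2 ∇f·∇g + f Δg` expands the left side, and Bochner's identity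
`Δ|∇v|² = 2|∇²v|² + 2 ∇v·∇Δv`, which rests on the symmetry of third partial derivatives,
expands the right side; rearranging gives the identity. The inequality is Cauchy–Schwarz for
the diagonal of the Hessian: `(Δv)² ≤ n ∑ᵢ (∂ᵢ∂ᵢv)² ≤ n |∇²v|²`. -/

open scoped BigOperators

noncomputable def pd {n : ℕ} (i : Fin n) (f : (Fin n → ℝ) → ℝ) (x : Fin n → ℝ) : ℝ :=
  fderiv ℝ f x (Pi.single i 1)

noncomputable def pd2 {n : ℕ} (i j : Fin n) (f : (Fin n → ℝ) → ℝ) (x : Fin n → ℝ) : ℝ :=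
  pd i (fun y => pd j f y) x

noncomputable def lap {n : ℕ} (f : (Fin n → ℝ) → ℝ) (x : Fin n → ℝ) : ℝ :=
  ∑ i, pd2 i i f x

noncomputable def gradSq {n : ℕ} (f : (Fin n → ℝ) → ℝ) (x : Fin n → ℝ) : ℝ :=
  ∑ i, (pd i f x) ^ 2

/-- Squared Frobenius norm of the Hessian, `|∇²v|²`. -/
noncomputable def hessSq {n : ℕ} (f : (Fin n → ℝ) → ℝ) (x : Fin n → ℝ) : ℝ :=
  ∑ i, ∑ j, (pd2 i j f x) ^ 2

section PartialDerivatives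

variable {n : ℕ} {f g : (Fin n → ℝ) → ℝ} {x : Fin n → ℝ}

theorem Filter.EventuallyEq.pd_eventuallyEq (h : f =ᶠ[nhds x] g) (i : Fin n) :
    pd i f =ᶠ[nhds x] pd i g := by
  filter_upwards [h.fderiv (𝕜 := ℝ)] with y hy
  simp only [pd, hy]

theorem Filter.EventuallyEq.pd_eq (h : f =ᶠ[nhds x] g) (i : Fin n) : pd i f x = pd i g x :=
  (h.pd_eventuallyEq i).eq_of_nhds

theorem Filter.EventuallyEq.lap_eq (h : f =ᶠ[nhds x] g) : lap f x = lap g x :=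
  Finset.sum_congr rfl fun i _ => ((h.pd_eventuallyEq i).pd_eventuallyEq i).eq_of_nhds

theorem pd_add (hf : DifferentiableAt ℝ f x) (hg : DifferentiableAt ℝ g x) (i : Fin n) :
    pd i (fun y => f y + g y) x = pd i f x + pd i g x := by
  simp [pd, fderiv_fun_add hf hg]

theorem pd_mul (hf : DifferentiableAt ℝ f x) (hg : DifferentiableAt ℝ g x) (i : Fin n) :
    pd i (fun y => f y * g y) x = pd i f x * g x + f x * pd i g x := by
  simp only [pd, fderiv_fun_mul hf hg, add_apply, smul_apply, smul_eq_mul]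
  ring

theorem pd_sum {ι : Type*} (s : Finset ι) {F : ι → (Fin n → ℝ) → ℝ}
    (hF : ∀ k ∈ s, DifferentiableAt ℝ (F k) x) (i : Fin n) :
    pd i (fun y => ∑ k ∈ s, F k y) x = ∑ k ∈ s, pd i (F k) x := by
  simp [pd, fderiv_fun_sum hF]

theorem pd_const_mul (c : ℝ) (i : Fin n) : pd i (fun y => c * f y) = fun y => c * pd i f y := by
  funext y
  simp [pd, ← smul_eq_mul, ← Pi.smul_def, fderiv_const_smul_field]

theorem pd_sub_const (c : ℝ) (i : Fin n) : pd i (fun y => f y - c) = pd i f := by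
  funext y
  simp only [pd, fderiv_sub_const]

theorem lap_const_mul (c : ℝ) : lap (fun y => c * f y) x = c * lap f x := by
  simp only [lap, pd2, pd_const_mul, Finset.mul_sum]

theorem lap_sub_const (c : ℝ) : lap (fun y => f y - c) x = lap f x := by
  simp only [lap, pd2, pd_sub_const]

theorem pd_pd_comm (hf : ContDiffAt ℝ 2 f x) (i j : Fin n) :
    pd i (pd j f) x = pd j (pd i f) x := by
  have hd : DifferentiableAt ℝ (fderiv ℝ f) x :=
    (hf.fderiv_right (m := 1) le_rfl).differentiableAt one_ne_zero
  have hsecond : ∀ a b : Fin n,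
      pd a (pd b f) x = fderiv ℝ (fderiv ℝ f) x (Pi.single a 1) (Pi.single b 1) := by
    intro a b
    change fderiv ℝ (fun y => fderiv ℝ f y (Pi.single b 1)) x (Pi.single a 1) = _
    simp [fderiv_clm_apply hd (differentiableAt_const _)]
  rw [hsecond, hsecond]
  exact (hf.isSymmSndFDerivAt (by simp [minSmoothness_of_isRCLikeNormedField])).eq _ _

end PartialDerivatives

theorem ContDiffOn.differentiableAt_of_isOpen {𝕜 E F : Type*} [NontriviallyNormedField 𝕜]
    [NormedAddCommGroup E] [NormedSpace 𝕜 E] [NormedAddCommGroup F] [NormedSpace 𝕜 F]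
    {k : WithTop ℕ∞} {s : Set E} {f : E → F} {x : E}
    (hf : ContDiffOn 𝕜 k f s) (hk : k ≠ 0) (hs : IsOpen s) (hx : x ∈ s) :
    DifferentiableAt 𝕜 f x :=
  (hf.differentiableOn hk).differentiableAt (hs.mem_nhds hx)

theorem hessSq_eq_sum_gradSq_pd {n : ℕ} (f : (Fin n → ℝ) → ℝ) (x : Fin n → ℝ) :
    hessSq f x = ∑ j, gradSq (pd j f) x := by
  simp only [hessSq, gradSq, pd2]
  exact Finset.sum_comm

section SmoothOnOpen

variable {n : ℕ} {U : Set (Fin n → ℝ)} {f g : (Fin n → ℝ) → ℝ} {x : Fin n → ℝ}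

theorem contDiffOn_pd (hU : IsOpen U) (hf : ContDiffOn ℝ (⊤ : ℕ∞) f U) (i : Fin n) :
    ContDiffOn ℝ (⊤ : ℕ∞) (pd i f) U :=
  (hf.fderiv_of_isOpen hU (by simp)).clm_apply contDiffOn_const

theorem contDiffOn_lap (hU : IsOpen U) (hf : ContDiffOn ℝ (⊤ : ℕ∞) f U) :
    ContDiffOn ℝ (⊤ : ℕ∞) (lap f) U :=
  ContDiffOn.sum fun i _ => contDiffOn_pd hU (contDiffOn_pd hU hf i) i

theorem lap_sum {ι : Type*} (s : Finset ι) {F : ι → (Fin n → ℝ) → ℝ} (hU : IsOpen U)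
    (hF : ∀ k ∈ s, ContDiffOn ℝ (⊤ : ℕ∞) (F k) U) (hx : x ∈ U) :
    lap (fun y => ∑ k ∈ s, F k y) x = ∑ k ∈ s, lap (F k) x := by
  have hfirst : ∀ i,
      pd i (fun y => ∑ k ∈ s, F k y) =ᶠ[nhds x] fun y => ∑ k ∈ s, pd i (F k) y := by
    intro i
    filter_upwards [hU.mem_nhds hx] with y hy
    exact pd_sum s (fun k hk => (hF k hk).differentiableAt_of_isOpen (by simp) hU hy) i
  simp only [lap]
  rw [Finset.sum_comm]
  refine Finset.sum_congr rfl fun i _ => ?_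
  rw [pd2, (hfirst i).pd_eq i, pd_sum s fun k hk =>
    (contDiffOn_pd hU (hF k hk) i).differentiableAt_of_isOpen (by simp) hU hx]
  rfl

theorem lap_mul (hU : IsOpen U) (hf : ContDiffOn ℝ (⊤ : ℕ∞) f U)
    (hg : ContDiffOn ℝ (⊤ : ℕ∞) g U) (hx : x ∈ U) :
    lap (fun y => f y * g y) x
      = lap f x * g x + 2 * ∑ i, pd i f x * pd i g x + f x * lap g x := by
  have hdiff : ∀ {h : (Fin n → ℝ) → ℝ},
      ContDiffOn ℝ (⊤ : ℕ∞) h U → ∀ y ∈ U, DifferentiableAt ℝ h y :=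
    fun hh _ hy => hh.differentiableAt_of_isOpen (by simp) hU hy
  have hfirst : ∀ i, pd i (fun y => f y * g y)
      =ᶠ[nhds x] fun y => pd i f y * g y + f y * pd i g y := by
    intro i
    filter_upwards [hU.mem_nhds hx] with y hy
    exact pd_mul (hdiff hf y hy) (hdiff hg y hy) i
  have hsecond : ∀ i, pd i (fun y => pd i f y * g y + f y * pd i g y) x
      = pd2 i i f x * g x + 2 * (pd i f x * pd i g x) + f x * pd2 i i g x := by
    intro i
    have hdf := contDiffOn_pd hU hf i
    have hdg := contDiffOn_pd hU hg i
    rw [pd_add (hdiff (hdf.mul hg) x hx) (hdiff (hf.mul hdg) x hx),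
      pd_mul (hdiff hdf x hx) (hdiff hg x hx), pd_mul (hdiff hf x hx) (hdiff hdg x hx), pd2, pd2]
    ring
  calc lap (fun y => f y * g y) x
      = ∑ i, pd i (fun y => pd i f y * g y + f y * pd i g y) x :=
        Finset.sum_congr rfl fun i _ => (hfirst i).pd_eq i
    _ = ∑ i, (pd2 i i f x * g x + 2 * (pd i f x * pd i g x) + f x * pd2 i i g x) :=
        Finset.sum_congr rfl fun i _ => hsecond i
    _ = _ := by simp only [lap, Finset.sum_add_distrib, Finset.sum_mul, Finset.mul_sum]

theorem lap_sq (hU : IsOpen U) (hf : ContDiffOn ℝ (⊤ : ℕ∞) f U) (hx : x ∈ U) :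
    lap (fun y => f y ^ 2) x = 2 * f x * lap f x + 2 * gradSq f x := by
  have hsq : (fun y => f y ^ 2) = fun y => f y * f y := funext fun y => sq (f y)
  rw [hsq, lap_mul hU hf hf hx, gradSq]
  simp only [← sq]
  ring

theorem lap_pd (hU : IsOpen U) (hf : ContDiffOn ℝ (⊤ : ℕ∞) f U) (hx : x ∈ U) (j : Fin n) :
    lap (pd j f) x = pd j (lap f) x := by
  have hC2 : ∀ {h : (Fin n → ℝ) → ℝ},
      ContDiffOn ℝ (⊤ : ℕ∞) h U → ∀ y ∈ U, ContDiffAt ℝ 2 h y :=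
    fun hh _ hy => (hh.contDiffAt (hU.mem_nhds hy)).of_le (WithTop.coe_le_coe.2 le_top)
  -- `∂ᵢ∂ᵢ∂ⱼ = ∂ᵢ∂ⱼ∂ᵢ` differentiates the symmetry `∂ᵢ∂ⱼ = ∂ⱼ∂ᵢ`, so it is needed near `x`.
  have hcomm : ∀ i, pd i (pd j f) =ᶠ[nhds x] pd j (pd i f) := by
    intro i
    filter_upwards [hU.mem_nhds hx] with y hy
    exact pd_pd_comm (hC2 hf y hy) i j
  change ∑ i, pd i (pd i (pd j f)) x = pd j (fun y => ∑ i, pd i (pd i f) y) x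
  rw [pd_sum _ fun i _ =>
    (contDiffOn_pd hU (contDiffOn_pd hU hf i) i).differentiableAt_of_isOpen (by simp) hU hx]
  refine Finset.sum_congr rfl fun i _ => ?_
  rw [(hcomm i).pd_eq i]
  exact pd_pd_comm (hC2 (contDiffOn_pd hU hf i) x hx) i j

theorem lap_gradSq (hU : IsOpen U) (hf : ContDiffOn ℝ (⊤ : ℕ∞) f U) (hx : x ∈ U) :
    lap (gradSq f) x = 2 * hessSq f x + 2 * ∑ j, pd j f x * pd j (lap f) x := by
  have hgrad : gradSq f = fun y => ∑ j, pd j f y ^ 2 := rfl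
  rw [hgrad, lap_sum _ hU (fun j _ => (contDiffOn_pd hU hf j).pow 2) hx, hessSq_eq_sum_gradSq_pd]
  simp only [lap_sq hU (contDiffOn_pd hU hf _) hx, lap_pd hU hf hx, Finset.sum_add_distrib,
    mul_assoc, ← Finset.mul_sum]
  ring

end SmoothOnOpen

theorem sq_lap_le_mul_hessSq {n : ℕ} (f : (Fin n → ℝ) → ℝ) (x : Fin n → ℝ) :
    lap f x ^ 2 ≤ n * hessSq f x := by
  have hdiag : ∑ i, pd2 i i f x ^ 2 ≤ hessSq f x :=
    Finset.sum_le_sum fun i _ => Finset.single_le_sum (f := fun j => pd2 i j f x ^ 2)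
      (fun j _ => sq_nonneg _) (Finset.mem_univ i)
  calc lap f x ^ 2 ≤ n * ∑ i, pd2 i i f x ^ 2 := by
        simpa [lap] using sq_sum_le_card_mul_sum_sq (s := Finset.univ) (f := fun i => pd2 i i f x)
    _ ≤ n * hessSq f x := by gcongr

theorem stmt4_general {n : ℕ} (Ω : Set (Fin n → ℝ)) (hΩ : IsOpen Ω)
    (v : (Fin n → ℝ) → ℝ) (hv : ContDiffOn ℝ (⊤ : ℕ∞) v Ω)
    (hpde : ∀ x ∈ Ω, v x * lap v x = ((n : ℝ) / 2) * (gradSq v x - 1)) :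
    ∀ x ∈ Ω,
      v x * lap (fun y => lap v y) x
          + (2 - (n : ℝ)) * ∑ i, pd i v x * pd i (fun y => lap v y) x
        = (n : ℝ) * hessSq v x - (lap v x) ^ 2 ∧
      0 ≤ (n : ℝ) * hessSq v x - (lap v x) ^ 2 := by
  intro x hx
  have hpde_lap : lap (fun y => v y * lap v y) x
      = lap (fun y => (n : ℝ) / 2 * (gradSq v y - 1)) x :=
    Filter.EventuallyEq.lap_eq (Filter.eventually_of_mem (hΩ.mem_nhds hx) hpde)
  rw [lap_mul hΩ hv (contDiffOn_lap hΩ hv) hx, lap_const_mul, lap_sub_const,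
    lap_gradSq hΩ hv hx] at hpde_lap
  exact ⟨by linear_combination hpde_lap, sub_nonneg.2 (sq_lap_le_mul_hessSq v x)⟩

theorem stmt4 {n : ℕ} (hn : 3 ≤ n) (Ω : Set (Fin n → ℝ)) (hΩ : IsOpen Ω)
    (v : (Fin n → ℝ) → ℝ) (hv : ContDiffOn ℝ (⊤ : ℕ∞) v Ω)
    (hvpos : ∀ x ∈ Ω, 0 < v x)
    (hpde : ∀ x ∈ Ω, v x * lap v x = ((n : ℝ) / 2) * (gradSq v x - 1)) :
    ∀ x ∈ Ω,
      v x * lap (fun y => lap v y) x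
          + (2 - (n : ℝ)) * ∑ i, pd i v x * pd i (fun y => lap v y) x
        = (n : ℝ) * hessSq v x - (lap v x) ^ 2 ∧
      0 ≤ (n : ℝ) * hessSq v x - (lap v x) ^ 2 :=
  stmt4_general Ω hΩ v hv hpde
end

section
/- Fix n ≥ 6, a constant A > 0, and define G(r) = r^{2−n} + A for r > 0 (the flat-case Green's function model with positive mass). Let F(r) = G(r)^{−2/(n−2)}. Then F(r)·F''(r) − (1/2)·F'(r)² = −2(n−1)A·rⁿ + O(r^{n+1}) as r → 0⁺; in particular there exist r₀ > 0 and C > 0 such that F(r)F''(r) − (1/2)F'(r)² ≤ −C·rⁿ for all 0 < r < r₀. -/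
/-!
With `p = 2 - n` the model is `F = G ^ (2 / p)` for `G r = r ^ p + A`, and for this exponent the
`r ^ (2p - 2)` terms of `F F'' - F' ^ 2 / 2` cancel, leaving the exact identity
`F F'' - F' ^ 2 / 2 = -2 (n - 1) A rⁿ (1 + A r ^ (n - 2)) ^ (4 / (2 - n) - 2)` on `r > 0`.
The last factor is a smooth function of `r` equal to `1` at `0`, which gives the `O(r ^ (n + 1))`
remainder, and the sign near `0` follows from the leading term.
-/

open Asymptotics Topology

/-- The flat-case Green's function model with positive mass:
`F(r) = G(r)^{−2/(n−2)}` with `G(r) = r^{2−n} + A`. -/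
noncomputable def Fmodel (n : ℕ) (A : ℝ) : ℝ → ℝ := fun r =>
  (r ^ ((2 : ℝ) - (n : ℝ)) + A) ^ (-(2 : ℝ) / ((n : ℝ) - 2))

open Filter Set

section RpowAddConst

variable {p A α r : ℝ}

lemma hasDerivAt_rpow_add_const (hr : 0 < r) :
    HasDerivAt (fun x => x ^ p + A) (p * r ^ (p - 1)) r :=
  (Real.hasDerivAt_rpow_const (Or.inl hr.ne')).add_const A

lemma hasDerivAt_rpow_add_const_rpow (hA : 0 ≤ A) (hr : 0 < r) :
    HasDerivAt (fun x => (x ^ p + A) ^ α) (p * r ^ (p - 1) * α * (r ^ p + A) ^ (α - 1)) r :=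
  (hasDerivAt_rpow_add_const hr).rpow_const (Or.inl (by positivity))

lemma hasDerivAt_deriv_rpow_add_const_rpow (hA : 0 ≤ A) (hr : 0 < r) :
    HasDerivAt (deriv fun x => (x ^ p + A) ^ α)
      (p * (p - 1) * r ^ (p - 2) * α * (r ^ p + A) ^ (α - 1)
        + p * r ^ (p - 1) * α * (p * r ^ (p - 1) * (α - 1) * (r ^ p + A) ^ (α - 2))) r := by
  have hderiv : (deriv fun x => (x ^ p + A) ^ α) =ᶠ[𝓝 r]
      fun x => p * x ^ (p - 1) * α * (x ^ p + A) ^ (α - 1) := by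
    filter_upwards [Ioi_mem_nhds hr] with x hx
    exact (hasDerivAt_rpow_add_const_rpow hA hx).deriv
  refine HasDerivAt.congr_of_eventuallyEq ?_ hderiv
  have hpow : HasDerivAt (fun x => x ^ (p - 1)) ((p - 1) * r ^ (p - 1 - 1)) r :=
    Real.hasDerivAt_rpow_const (Or.inl hr.ne')
  have hG : HasDerivAt (fun x => (x ^ p + A) ^ (α - 1))
      (p * r ^ (p - 1) * (α - 1) * (r ^ p + A) ^ (α - 1 - 1)) r :=
    hasDerivAt_rpow_add_const_rpow hA hr
  refine (((hpow.const_mul p).mul_const α).mul hG).congr_deriv ?_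
  rw [show p - 1 - 1 = p - 2 by ring, show α - 1 - 1 = α - 2 by ring]
  ring

lemma rpow_add_const_two_div_mul_deriv_deriv_sub (hp : p ≠ 0) (hA : 0 ≤ A) (hr : 0 < r) :
    (r ^ p + A) ^ (2 / p) * deriv (deriv fun x => (x ^ p + A) ^ (2 / p)) r
        - 1 / 2 * deriv (fun x => (x ^ p + A) ^ (2 / p)) r ^ 2
      = 2 * (p - 1) * A * r ^ (p - 2) * (r ^ p + A) ^ (4 / p - 2) := by
  have hG : 0 < r ^ p + A := by positivity
  rw [(hasDerivAt_deriv_rpow_add_const_rpow hA hr).deriv,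
    (hasDerivAt_rpow_add_const_rpow hA hr).deriv,
    show 4 / p - 2 = 2 / p * 2 - 2 by ring]
  simp only [Real.rpow_sub hr, Real.rpow_sub hG, Real.rpow_mul hG.le, Real.rpow_one,
    Real.rpow_two]
  field_simp
  ring

end RpowAddConst

lemma Fmodel_eq (n : ℕ) (A : ℝ) :
    Fmodel n A = fun r => (r ^ ((2 : ℝ) - n) + A) ^ (2 / ((2 : ℝ) - n)) := by
  funext r
  rw [Fmodel, neg_div, ← div_neg, neg_sub]

lemma Fmodel_mul_deriv_deriv_sub {n : ℕ} (hn : 3 ≤ n) {A r : ℝ} (hA : 0 ≤ A) (hr : 0 < r) :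
    Fmodel n A r * deriv (deriv (Fmodel n A)) r - 1 / 2 * deriv (Fmodel n A) r ^ 2
      = -(2 * ((n : ℝ) - 1) * A * r ^ n)
          * (1 + A * r ^ (n - 2)) ^ (4 / ((2 : ℝ) - n) - 2) := by
  have hn' : (3 : ℝ) ≤ n := by exact_mod_cast hn
  have hp : (2 : ℝ) - n ≠ 0 := by linarith
  have hsplit : r ^ ((2 : ℝ) - n) + A = r ^ ((2 : ℝ) - n) * (1 + A * r ^ (n - 2)) := by
    rw [← Real.rpow_natCast, Nat.cast_sub (by omega : 2 ≤ n), mul_add, mul_one,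
      mul_left_comm, ← Real.rpow_add hr]
    norm_num
  have hrn : r ^ ((2 : ℝ) - n - 2) * r ^ (((2 : ℝ) - n) * (4 / (2 - n) - 2)) = r ^ n := by
    rw [← Real.rpow_add hr, ← Real.rpow_natCast]
    congr 1
    field_simp
    ring
  rw [Fmodel_eq, rpow_add_const_two_div_mul_deriv_deriv_sub hp hA hr, hsplit,
    Real.mul_rpow (by positivity) (by positivity), ← Real.rpow_mul hr.le]
  linear_combination
    (2 * ((2 : ℝ) - n - 1) * A * (1 + A * r ^ (n - 2)) ^ (4 / ((2 : ℝ) - n) - 2)) * hrn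

lemma one_add_mul_pow_rpow_sub_one_isBigO (A β : ℝ) {k : ℕ} (hk : k ≠ 0) :
    (fun r : ℝ => (1 + A * r ^ k) ^ β - 1) =O[𝓝 0] fun r => r := by
  have h : HasDerivAt (fun r : ℝ => (1 + A * r ^ k) ^ β)
      (A * (k * 0 ^ (k - 1)) * β * (1 + A * 0 ^ k) ^ (β - 1)) 0 :=
    (((hasDerivAt_pow k 0).const_mul A).const_add 1).rpow_const (Or.inl (by simp [hk]))
  simpa [hk] using h.isBigO_sub

lemma exists_le_neg_mul_pow_of_isBigO {f : ℝ → ℝ} {c : ℝ} (hc : 0 < c) {n : ℕ}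
    (hf : (fun r => f r - -(c * r ^ n)) =O[𝓝[>] 0] fun r => r ^ (n + 1)) :
    ∃ r₀ : ℝ, 0 < r₀ ∧ ∃ C : ℝ, 0 < C ∧ ∀ r : ℝ, 0 < r → r < r₀ → f r ≤ -C * r ^ n := by
  have hsmall := (hf.trans_isLittleO
    ((isLittleO_pow_pow n.lt_succ_self).mono nhdsWithin_le_nhds)).def (half_pos hc)
  obtain ⟨r₀, hr₀, hsub⟩ := mem_nhdsGT_iff_exists_Ioo_subset.1 hsmall
  refine ⟨r₀, hr₀, c / 2, half_pos hc, fun r hr hrr₀ => ?_⟩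
  have hbound := hsub ⟨hr, hrr₀⟩
  simp only [mem_ofPred_eq, Real.norm_eq_abs, abs_of_pos (pow_pos hr n)] at hbound
  linarith [le_abs_self (f r - -(c * r ^ n))]

theorem stmt12 (n : ℕ) (hn : 6 ≤ n) (A : ℝ) (hA : 0 < A) :
    ((fun r : ℝ => Fmodel n A r * deriv (deriv (Fmodel n A)) r
          - (1 / 2) * (deriv (Fmodel n A) r) ^ 2 - (-(2 * ((n : ℝ) - 1) * A * r ^ n)))
        =O[𝓝[>] (0 : ℝ)] fun r : ℝ => r ^ (n + 1)) ∧
    ∃ r₀ : ℝ, 0 < r₀ ∧ ∃ C : ℝ, 0 < C ∧ ∀ r : ℝ, 0 < r → r < r₀ →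
      Fmodel n A r * deriv (deriv (Fmodel n A)) r - (1 / 2) * (deriv (Fmodel n A) r) ^ 2
        ≤ -C * r ^ n := by
  have hc : 0 < 2 * ((n : ℝ) - 1) * A := by
    have : (6 : ℝ) ≤ n := by exact_mod_cast hn
    nlinarith
  have hcorr := (one_add_mul_pow_rpow_sub_one_isBigO A (4 / ((2 : ℝ) - n) - 2)
    (k := n - 2) (by omega)).mono (nhdsWithin_le_nhds (s := Ioi 0))
  have hasymp : (fun r : ℝ => Fmodel n A r * deriv (deriv (Fmodel n A)) r
      - (1 / 2) * (deriv (Fmodel n A) r) ^ 2 - (-(2 * ((n : ℝ) - 1) * A * r ^ n)))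
        =O[𝓝[>] (0 : ℝ)] fun r : ℝ => r ^ (n + 1) := by
    refine (((isBigO_refl (fun r : ℝ => r ^ n) _).mul hcorr).const_mul_left
      (-(2 * ((n : ℝ) - 1) * A))).congr' ?_ (.of_forall fun r => (pow_succ r n).symm)
    filter_upwards [self_mem_nhdsWithin] with r hr
    rw [Fmodel_mul_deriv_deriv_sub (by omega) hA.le hr]
    ring
  exact ⟨hasymp, exists_le_neg_mul_pow_of_isBigO hc hasymp⟩
end

section
/- Let f : [a,b] → ℝ be C² with f(a) = f(b) = 0 and f(m) > 0 for some m ∈ (a,b). Then there exists t* ∈ (a,b) with f''(t*) = 0, f'(t*) ≥ f(m)/(m−a) > 0, and 0 ≤ f(t*) ≤ (b−a)·f'(t*). -/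
/-!
By the mean value theorem on `[a, m]`, `f'` takes the value `f(m)/(m-a)` somewhere, while at the
endpoints it is at most half of that. Hence the maximum of `f'` over `[a, b]` is attained at an
interior point `t`, where `f''(t) = 0`; and the mean value theorem on `[a, t]` bounds
`f(t) = f(t) - f(a)` by `(t - a) f'(t)`.
-/

open Set

theorem exists_mem_Ioo_isMaxOn_of_lt {g : ℝ → ℝ} {a b ξ : ℝ} (hg : ContinuousOn g (Icc a b))
    (hξ : ξ ∈ Icc a b) (ha : g a < g ξ) (hb : g b < g ξ) :
    ∃ t ∈ Ioo a b, IsMaxOn g (Icc a b) t := by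
  obtain ⟨t, ht, hmax⟩ := isCompact_Icc.exists_isMaxOn ⟨ξ, hξ⟩ hg
  refine ⟨t, ⟨ht.1.lt_of_ne ?_, ht.2.lt_of_ne ?_⟩, hmax⟩
  · rintro rfl
    exact (hmax hξ).not_gt ha
  · rintro rfl
    exact (hmax hξ).not_gt hb

theorem derivWithin_Icc_of_mem_Ioo (f : ℝ → ℝ) {a b x : ℝ} (hx : x ∈ Ioo a b) :
    derivWithin f (Icc a b) x = deriv f x :=
  derivWithin_of_mem_nhds (Icc_mem_nhds hx.1 hx.2)

theorem IsMaxOn.deriv_of_derivWithin_Icc {f : ℝ → ℝ} {a b t : ℝ}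
    (hmax : IsMaxOn (derivWithin f (Icc a b)) (Icc a b) t) (ht : t ∈ Ioo a b) :
    IsMaxOn (deriv f) (Ioo a b) t := fun x hx => by
  have : derivWithin f (Icc a b) x ≤ derivWithin f (Icc a b) t := hmax (Ioo_subset_Icc_self hx)
  rwa [derivWithin_Icc_of_mem_Ioo f hx, derivWithin_Icc_of_mem_Ioo f ht] at this

theorem sub_le_deriv_mul_of_isMaxOn_deriv {f : ℝ → ℝ} {a b t : ℝ}
    (hfc : ContinuousOn f (Icc a b)) (hfd : DifferentiableOn ℝ f (Ioo a b))
    (ht : t ∈ Ioo a b) (hmax : IsMaxOn (deriv f) (Ioo a b) t) :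
    f t - f a ≤ deriv f t * (t - a) := by
  have hsub : Icc a t ⊆ Icc a b := Icc_subset_Icc_right ht.2.le
  refine (convex_Icc a t).image_sub_le_mul_sub_of_deriv_le (hfc.mono hsub) ?_ ?_
    a (left_mem_Icc.2 ht.1.le) t (right_mem_Icc.2 ht.1.le) ht.1.le
  · rw [interior_Icc]
    exact hfd.mono (Ioo_subset_Ioo_right ht.2.le)
  · rw [interior_Icc]
    exact fun x hx => hmax ⟨hx.1, hx.2.trans ht.2⟩

theorem stmt14_general (a b m : ℝ) (f : ℝ → ℝ) (hab : a < b) (ham : a < m) (hmb : m < b)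
    (hf : ContDiffOn ℝ 2 f (Set.Icc a b))
    (hfa : f a = 0) (hfm : 0 < f m)
    (hnn : ∀ x ∈ Set.Icc a b, 0 ≤ f x)
    (hda : |derivWithin f (Set.Icc a b) a| ≤ f m / (2 * (m - a)))
    (hdb : |derivWithin f (Set.Icc a b) b| ≤ f m / (2 * (m - a))) :
    ∃ t ∈ Set.Ioo a b, deriv (deriv f) t = 0 ∧
      f m / (m - a) ≤ deriv f t ∧ 0 < f m / (m - a) ∧
      0 ≤ f t ∧ f t ≤ (b - a) * deriv f t := by
  have hslope : 0 < f m / (m - a) := div_pos hfm (sub_pos.2 ham)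
  have hhalf : f m / (2 * (m - a)) < f m / (m - a) := by
    rw [mul_comm, ← div_div]
    exact half_lt_self hslope
  have hfc : ContinuousOn f (Icc a b) := hf.continuousOn
  have hfd : DifferentiableOn ℝ f (Ioo a b) :=
    (hf.differentiableOn two_ne_zero).mono Ioo_subset_Icc_self
  obtain ⟨ξ, hξ, hξslope⟩ := exists_deriv_eq_slope f ham
    (hfc.mono (Icc_subset_Icc_right hmb.le)) (hfd.mono (Ioo_subset_Ioo_right hmb.le))
  have hξ' : ξ ∈ Ioo a b := ⟨hξ.1, hξ.2.trans hmb⟩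
  rw [hfa, sub_zero, ← derivWithin_Icc_of_mem_Ioo f hξ'] at hξslope
  obtain ⟨t, ht, hmax⟩ := exists_mem_Ioo_isMaxOn_of_lt
    (hf.continuousOn_derivWithin (uniqueDiffOn_Icc hab) one_le_two) (Ioo_subset_Icc_self hξ')
    (by linarith [le_abs_self (derivWithin f (Icc a b) a)])
    (by linarith [le_abs_self (derivWithin f (Icc a b) b)])
  have hslope_le : f m / (m - a) ≤ deriv f t := by
    rw [← hξslope, ← derivWithin_Icc_of_mem_Ioo f ht]
    exact hmax (Ioo_subset_Icc_self hξ')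
  have hmax_deriv := hmax.deriv_of_derivWithin_Icc ht
  have hft := sub_le_deriv_mul_of_isMaxOn_deriv hfc hfd ht hmax_deriv
  refine ⟨t, ht, (hmax_deriv.isLocalMax (Ioo_mem_nhds ht.1 ht.2)).deriv_eq_zero, hslope_le, hslope,
    hnn t (Ioo_subset_Icc_self ht), ?_⟩
  calc f t ≤ deriv f t * (t - a) := by simpa only [hfa, sub_zero] using hft
    _ ≤ deriv f t * (b - a) := by gcongr; exacts [hslope.le.trans hslope_le, ht.2.le]
    _ = (b - a) * deriv f t := mul_comm _ _

theorem stmt14 (a b m : ℝ) (f : ℝ → ℝ) (hab : a < b) (ham : a < m) (hmb : m < b)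
    (hf : ContDiffOn ℝ 2 f (Set.Icc a b))
    (hfa : f a = 0) (hfb : f b = 0) (hfm : 0 < f m)
    (hnn : ∀ x ∈ Set.Icc a b, 0 ≤ f x)
    (hda : |derivWithin f (Set.Icc a b) a| ≤ f m / (2 * (m - a)))
    (hdb : |derivWithin f (Set.Icc a b) b| ≤ f m / (2 * (m - a))) :
    ∃ t ∈ Set.Ioo a b, deriv (deriv f) t = 0 ∧
      f m / (m - a) ≤ deriv f t ∧ 0 < f m / (m - a) ∧
      0 ≤ f t ∧ f t ≤ (b - a) * deriv f t :=
  stmt14_general a b m f hab ham hmb hf hfa hfm hnn hda hdb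
end
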